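/- Let k ≥ 3 and λ_1,…,λ_k, μ_1,…,μ_k be positive reals. Define θ_1 = (λ_1⋯λ_k)/(μ_2⋯μ_k), θ_2 = ((λ_1+μ_2)/λ_1)·θ_1, and θ_i = (μ_2⋯μ_{i-1})/(λ_1⋯λ_{i-1})·(λ_{i-1}+μ_i)·θ_1 for 3 ≤ i ≤ k. Then (θ_1,…,θ_k) satisfies the traffic equations θ_i = λ̄_i + Σ_{j=1}^k θ_j P_{j,i}, where λ̄_i = 0 for i < k, λ̄_k = λ_k, and the routing probabilities are P_{1,2} = 1, P_{i,i-1} = λ_{i-1}/(λ_{i-1}+μ_i) for 2 ≤ i ≤ k, P_{i,i+1} = μ_i/(λ_{i-1}+μ_i) for 2 ≤ i ≤ k−1, with all other entries zero. -/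

import Mathlib

/-!
The network is reversible. Put `w n = (μ_2⋯μ_n)/(λ_1⋯λ_n)`, so that
`θ_{n+1} = w n (λ_n + μ_{n+1}) θ_1` and `λ_{n+1} w (n+1) = μ_{n+1} w n`. Then `λ_n w n θ_1` is
the flow from station `n` to `n+1` and also the flow back, so `θ_j P_{j,i} = θ_i P_{i,j}` for all
stations, and the traffic equation at `i` reduces to `λ̄_i = θ_i (1 - ∑_j P_{i,j})`. Rows `i < k`
of `P` sum to `1`, and at station `k` the departures `θ_k μ_k/(λ_{k-1}+μ_k) = λ_k w k θ_1` equal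
`λ_k` by the choice of `θ_1 = 1 / w k`.
-/

open Finset

theorem traffic_equations_of_detailed_balance {ι R : Type*} [CommRing R] (S : Finset ι)
    (θ lamBar : ι → R) (P : ι → ι → R)
    (hbalance : ∀ i ∈ S, ∀ j ∈ S, θ j * P j i = θ i * P i j)
    (hexit : ∀ i ∈ S, lamBar i + θ i * ∑ j ∈ S, P i j = θ i) :
    ∀ i ∈ S, θ i = lamBar i + ∑ j ∈ S, θ j * P j i := by
  intro i hi
  rw [sum_congr rfl (hbalance i hi), ← mul_sum, hexit i hi]

namespace BirthDeathNetwork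

noncomputable def routing (k : ℕ) (lam mu : ℕ → ℝ) (j i : ℕ) : ℝ :=
  if j = 1 ∧ i = 2 then 1
  else if 2 ≤ j ∧ j ≤ k ∧ i = j - 1 then lam (j - 1) / (lam (j - 1) + mu j)
  else if 2 ≤ j ∧ j ≤ k - 1 ∧ i = j + 1 then mu j / (lam (j - 1) + mu j)
  else 0

noncomputable def weight (lam mu : ℕ → ℝ) (n : ℕ) : ℝ :=
  (∏ j ∈ Icc 2 n, mu j) / ∏ j ∈ Icc 1 n, lam j

variable {k : ℕ} {lam mu : ℕ → ℝ}

theorem routing_eq_zero {i j : ℕ} (h₁ : i ≠ j + 1) (h₂ : j ≠ i + 1) :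
    routing k lam mu j i = 0 := by
  unfold routing
  split_ifs <;> first | rfl | omega

theorem sum_routing_row {i : ℕ} (hk : 2 ≤ k) (hi₁ : 1 ≤ i) (hik : i ≤ k) :
    ∑ j ∈ Icc 1 k, routing k lam mu i j =
      routing k lam mu i (i - 1) + routing k lam mu i (i + 1) := by
  refine sum_eq_add (i - 1) (i + 1) (by omega) (fun j _ hj => routing_eq_zero (by omega) (by omega))
    (fun h => ?_) (fun h => ?_)
  · obtain rfl : i = 1 := by rw [mem_Icc] at h; omega
    simp [routing]
  · obtain rfl : i = k := by rw [mem_Icc] at h; omega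
    unfold routing
    split_ifs <;> first | rfl | omega

theorem sum_routing_one (hk : 2 ≤ k) : ∑ j ∈ Icc 1 k, routing k lam mu 1 j = 1 := by
  rw [sum_routing_row hk le_rfl (by omega)]
  simp [routing]

theorem sum_routing_succ {n : ℕ} (hn : 1 ≤ n) (hnk : n + 1 < k) (hpos : lam n + mu (n + 1) ≠ 0) :
    ∑ j ∈ Icc 1 k, routing k lam mu (n + 1) j = 1 := by
  rw [sum_routing_row (by omega) (by omega) hnk.le, routing, if_neg (by omega),
    if_pos (by omega), routing, if_neg (by omega), if_neg (by omega), if_pos (by omega),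
    Nat.add_sub_cancel, ← add_div, div_self hpos]

theorem sum_routing_last {n : ℕ} (hn : 1 ≤ n) :
    ∑ j ∈ Icc 1 (n + 1), routing (n + 1) lam mu (n + 1) j = lam n / (lam n + mu (n + 1)) := by
  rw [sum_routing_row (by omega) (by omega) le_rfl, routing, if_neg (by omega),
    if_pos (by omega), routing, if_neg (by omega), if_neg (by omega), if_neg (by omega),
    add_zero, Nat.add_sub_cancel]

theorem lam_add_mu_succ_ne_zero (hlam : ∀ i ∈ Icc 1 k, 0 < lam i)
    (hmu : ∀ i ∈ Icc 1 k, 0 < mu i) {n : ℕ} (hn : 1 ≤ n) (hnk : n + 1 ≤ k) :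
    lam n + mu (n + 1) ≠ 0 :=
  (add_pos (hlam n (mem_Icc.2 ⟨hn, by omega⟩)) (hmu (n + 1) (mem_Icc.2 ⟨by omega, hnk⟩))).ne'

theorem weight_one : weight lam mu 1 = (lam 1)⁻¹ := by
  simp [weight]

theorem lam_mul_weight_succ {n : ℕ} (hn : 1 ≤ n) (hlam : lam (n + 1) ≠ 0) :
    lam (n + 1) * weight lam mu (n + 1) = mu (n + 1) * weight lam mu n := by
  rw [weight, weight, prod_Icc_succ_top (by omega), prod_Icc_succ_top (by omega)]
  field_simp

theorem detailed_balance {θ : ℕ → ℝ}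
    (hadj : ∀ n, 1 ≤ n → n + 1 ≤ k →
      θ n * routing k lam mu n (n + 1) = θ (n + 1) * routing k lam mu (n + 1) n) :
    ∀ i ∈ Icc 1 k, ∀ j ∈ Icc 1 k, θ j * routing k lam mu j i = θ i * routing k lam mu i j := by
  intro i hi j hj
  rw [mem_Icc] at hi hj
  by_cases hij : i = j + 1
  · subst hij
    exact hadj j hj.1 hi.2
  by_cases hji : j = i + 1
  · subst hji
    exact (hadj i hi.1 hj.2).symm
  rw [routing_eq_zero hij hji, routing_eq_zero hji hij, mul_zero, mul_zero]

section Throughput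

variable {θ : ℕ → ℝ}

theorem theta_succ_mul_routing_succ_self
    (hθ : ∀ n, 1 ≤ n → n + 1 ≤ k → θ (n + 1) = weight lam mu n * (lam n + mu (n + 1)) * θ 1)
    {n : ℕ} (hn : 1 ≤ n) (hnk : n + 1 ≤ k) (hpos : lam n + mu (n + 1) ≠ 0) :
    θ (n + 1) * routing k lam mu (n + 1) n = lam n * weight lam mu n * θ 1 := by
  rw [routing, if_neg (by omega), if_pos (by omega), Nat.add_sub_cancel, hθ n hn hnk]
  field_simp

theorem theta_succ_mul_mu_div
    (hθ : ∀ n, 1 ≤ n → n + 1 ≤ k → θ (n + 1) = weight lam mu n * (lam n + mu (n + 1)) * θ 1)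
    {n : ℕ} (hn : 1 ≤ n) (hnk : n + 1 ≤ k) (hlam : lam (n + 1) ≠ 0)
    (hpos : lam n + mu (n + 1) ≠ 0) :
    θ (n + 1) * (mu (n + 1) / (lam n + mu (n + 1))) =
      lam (n + 1) * weight lam mu (n + 1) * θ 1 := by
  rw [lam_mul_weight_succ hn hlam, hθ n hn hnk]
  field_simp

theorem adjacent_balance
    (hθ : ∀ n, 1 ≤ n → n + 1 ≤ k → θ (n + 1) = weight lam mu n * (lam n + mu (n + 1)) * θ 1)
    (hlam : ∀ i ∈ Icc 1 k, 0 < lam i) (hmu : ∀ i ∈ Icc 1 k, 0 < mu i)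
    {n : ℕ} (hn : 1 ≤ n) (hnk : n + 1 ≤ k) :
    θ n * routing k lam mu n (n + 1) = θ (n + 1) * routing k lam mu (n + 1) n := by
  rw [theta_succ_mul_routing_succ_self hθ hn hnk (lam_add_mu_succ_ne_zero hlam hmu hn hnk)]
  obtain rfl | ⟨m, hm, rfl⟩ : n = 1 ∨ ∃ m, 1 ≤ m ∧ n = m + 1 :=
    hn.eq_or_lt.imp Eq.symm fun h => ⟨n - 1, by omega, by omega⟩
  · rw [routing, if_pos ⟨rfl, rfl⟩, weight_one, mul_one,
      mul_inv_cancel₀ (hlam 1 (mem_Icc.2 ⟨le_rfl, by omega⟩)).ne', one_mul]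
  · rw [routing, if_neg (by omega), if_neg (by omega), if_pos (by omega), Nat.add_sub_cancel,
      theta_succ_mul_mu_div hθ hm (by omega) (hlam _ (mem_Icc.2 ⟨by omega, by omega⟩)).ne'
        (lam_add_mu_succ_ne_zero hlam hmu hm (by omega))]

theorem lamBar_add_outflow_eq (hk : 2 ≤ k)
    (hθ : ∀ n, 1 ≤ n → n + 1 ≤ k → θ (n + 1) = weight lam mu n * (lam n + mu (n + 1)) * θ 1)
    (hθk : weight lam mu k * θ 1 = 1)
    (hlam : ∀ i ∈ Icc 1 k, 0 < lam i) (hmu : ∀ i ∈ Icc 1 k, 0 < mu i)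
    {lamBar : ℕ → ℝ} (hlamBar : ∀ i, i < k → lamBar i = 0) (hlamBark : lamBar k = lam k) :
    ∀ i ∈ Icc 1 k, lamBar i + θ i * ∑ j ∈ Icc 1 k, routing k lam mu i j = θ i := by
  intro i hi
  rw [mem_Icc] at hi
  rcases hi.2.lt_or_eq with hik | rfl
  · rw [hlamBar i hik, zero_add]
    obtain rfl | ⟨n, hn, rfl⟩ : i = 1 ∨ ∃ n, 1 ≤ n ∧ i = n + 1 :=
      hi.1.eq_or_lt.imp Eq.symm fun h => ⟨i - 1, by omega, by omega⟩
    · rw [sum_routing_one hk, mul_one]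
    · rw [sum_routing_succ hn hik (lam_add_mu_succ_ne_zero hlam hmu hn hik.le), mul_one]
  · obtain ⟨n, rfl⟩ : ∃ n, i = n + 1 := ⟨i - 1, by omega⟩
    have hpos := lam_add_mu_succ_ne_zero hlam hmu (by omega : 1 ≤ n) le_rfl
    have hexit := theta_succ_mul_mu_div hθ (by omega) le_rfl
      (hlam _ (mem_Icc.2 ⟨by omega, le_rfl⟩)).ne' hpos
    rw [mul_assoc, hθk, mul_one] at hexit
    rw [sum_routing_last (by omega), hlamBark, ← hexit, ← mul_add, ← add_div, add_comm (mu _),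
      div_self hpos, mul_one]

end Throughput

end BirthDeathNetwork

open BirthDeathNetwork

theorem traffic_equations_solution
    (k : ℕ) (hk : 3 ≤ k) (lam mu : ℕ → ℝ)
    (hlam : ∀ i ∈ Icc 1 k, 0 < lam i) (hmu : ∀ i ∈ Icc 1 k, 0 < mu i)
    (θ : ℕ → ℝ)
    (hθ1 : θ 1 = (∏ j ∈ Icc 1 k, lam j) / (∏ j ∈ Icc 2 k, mu j))
    (hθ2 : θ 2 = ((lam 1 + mu 2) / lam 1) * θ 1)
    (hθi : ∀ i, 3 ≤ i → i ≤ k →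
      θ i = ((∏ j ∈ Icc 2 (i - 1), mu j) / (∏ j ∈ Icc 1 (i - 1), lam j))
              * (lam (i - 1) + mu i) * θ 1)
    (P : ℕ → ℕ → ℝ)
    (hP : ∀ j i, P j i =
      if j = 1 ∧ i = 2 then 1
      else if 2 ≤ j ∧ j ≤ k ∧ i = j - 1 then lam (j - 1) / (lam (j - 1) + mu j)
      else if 2 ≤ j ∧ j ≤ k - 1 ∧ i = j + 1 then mu j / (lam (j - 1) + mu j)
      else 0)
    (lamBar : ℕ → ℝ)
    (hlamBar : ∀ i, i < k → lamBar i = 0) (hlamBark : lamBar k = lam k) :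
    ∀ i ∈ Icc 1 k, θ i = lamBar i + ∑ j ∈ Icc 1 k, θ j * P j i := by
  obtain rfl : P = routing k lam mu := funext fun j => funext fun i => hP j i
  have hθ : ∀ n, 1 ≤ n → n + 1 ≤ k →
      θ (n + 1) = weight lam mu n * (lam n + mu (n + 1)) * θ 1 := by
    intro n hn hnk
    rcases hn.eq_or_lt with rfl | hn
    · rw [hθ2, weight_one]
      ring
    · simpa [weight] using hθi (n + 1) (by omega) hnk
  have hθk : weight lam mu k * θ 1 = 1 := by
    have hL : ∏ j ∈ Icc 1 k, lam j ≠ 0 := (prod_pos hlam).ne'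
    have hM : ∏ j ∈ Icc 2 k, mu j ≠ 0 :=
      (prod_pos fun j hj => hmu j (Icc_subset_Icc_left one_le_two hj)).ne'
    rw [weight, hθ1]
    field_simp
  exact traffic_equations_of_detailed_balance _ _ _ _
    (detailed_balance fun n hn hnk => adjacent_balance hθ hlam hmu hn hnk)
    (lamBar_add_outflow_eq (by omega) hθ hθk hlam hmu hlamBar hlamBark)
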